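/- arXiv:2506.11174 — 6 statements merged into one kernel-verified Lean document; each statement's English description precedes it below -/
import Mathlib

section
/- Let $G$ be a finite group and $p$ a prime with $p > |G|!$. If $G'$ is a group fitting in a short exact sequence $1 \to G \to G' \to (\mathbb{Z}/p^r)^b \to 1$, then $G' \cong G \times (\mathbb{Z}/p^r)^b$. -/
/-!
The kernel `N = ker π ≅ G` has index `p ^ (r * b)`, which is prime to `|N|`, so by
Schur–Zassenhaus `N` has a complement `H ≅ (ℤ/pʳ)ᵇ`. The conjugation action of `H` on `N` is a
homomorphism from a group of order `p ^ (r * b)` into `Aut N`, whose order divides `|N|!` and is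
therefore prime to `p`; so the action is trivial, `H` centralizes `N`, and `G' ≅ N × H`.
-/

theorem MonoidHom.eq_one_of_coprime_card {A B : Type*} [Group A] [Group B] (f : A →* B)
    (h : (Nat.card A).Coprime (Nat.card B)) : f = 1 := by
  ext a
  exact orderOf_eq_one_iff.mp <| Nat.eq_one_of_dvd_coprimes h
    ((orderOf_map_dvd f a).trans (orderOf_dvd_natCard a)) (orderOf_dvd_natCard (f a))

theorem MulAut.card_dvd_factorial (M : Type*) [Group M] [Finite M] :
    Nat.card (MulAut M) ∣ (Nat.card M).factorial :=
  Nat.card_perm (α := M) ▸ Subgroup.card_dvd_of_injective (MulAut.toPerm M)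
    fun _ _ h => MulEquiv.toEquiv_injective h

namespace Subgroup

variable {G : Type*} [Group G]

noncomputable def IsComplement'.mulEquivProdOfCommute {H K : Subgroup G}
    (h : H.IsComplement' K) (comm : ∀ (x : H) (y : K), Commute (x : G) y) : H × K ≃* G :=
  MulEquiv.ofBijective (H.subtype.noncommCoprod K.subtype comm) h

theorem commute_of_coprime_factorial {N H : Subgroup G} [N.Normal] [Finite N]
    (hN : (Nat.card N).factorial.Coprime (Nat.card H)) (n : N) (k : H) : Commute (n : G) k := by
  have htriv : (MulAut.conjNormal (H := N)).comp H.subtype = 1 :=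
    MonoidHom.eq_one_of_coprime_card _ (hN.coprime_dvd_left (MulAut.card_dvd_factorial N)).symm
  have hconj : (k : G) * n * (k : G)⁻¹ = n := by
    rw [← MulAut.conjNormal_apply]
    exact congrArg Subtype.val (DFunLike.congr_fun (DFunLike.congr_fun htriv k) n)
  exact (mul_inv_eq_iff_eq_mul.mp hconj).symm

theorem nonempty_mulEquiv_prod_quotient_of_coprime_factorial (N : Subgroup G) [N.Normal]
    [Finite N] (hN : (Nat.card N).factorial.Coprime N.index) : Nonempty (G ≃* N × (G ⧸ N)) := by
  obtain ⟨H, hH⟩ := exists_right_complement'_of_coprime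
    (hN.coprime_dvd_left (Nat.dvd_factorial Nat.card_pos le_rfl))
  have hcomm := commute_of_coprime_factorial (hH.symm.index_eq_card ▸ hN)
  exact ⟨(hH.mulEquivProdOfCommute hcomm).symm.trans
    ((MulEquiv.refl N).prodCongr hH.symm.QuotientMulEquiv.symm)⟩

end Subgroup

/-- If `G` is a finite group, `p` a prime with `p > |G|!`, and `G'` sits in a
short exact sequence `1 → G → G' → (ℤ/pʳ)ᵇ → 1`, then `G' ≅ G × (ℤ/pʳ)ᵇ`. -/
theorem stmt_1 {G G' : Type*} [Group G] [Finite G] [Group G']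
    (p : ℕ) (hp : p.Prime) (hpG : (Nat.card G).factorial < p) (r b : ℕ)
    (ι : G →* G') (π : G' →* (Fin b → Multiplicative (ZMod (p ^ r))))
    (hι : Function.Injective ι) (hπ : Function.Surjective π)
    (hexact : ι.range = π.ker) :
    Nonempty (G' ≃* G × (Fin b → Multiplicative (ZMod (p ^ r)))) := by
  have eG : G ≃* π.ker := (MonoidHom.ofInjective hι).trans (MulEquiv.subgroupCongr hexact)
  have : Finite π.ker := Finite.of_equiv G eG.toEquiv
  have eQ := QuotientGroup.quotientKerEquivOfSurjective π hπ
  have hindex : π.ker.index = (p ^ r) ^ b := by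
    rw [Subgroup.index_eq_card, Nat.card_congr eQ.toEquiv, Nat.card_fun,
      Nat.card_congr Multiplicative.toAdd, Nat.card_zmod, Nat.card_fin]
  have hcop : (Nat.card π.ker).factorial.Coprime π.ker.index := by
    rw [← Nat.card_congr eG.toEquiv, hindex]
    exact (((hp.coprime_iff_not_dvd.mpr
      (Nat.not_dvd_of_pos_of_lt (Nat.factorial_pos _) hpG)).pow_left r).pow_left b).symm
  obtain ⟨e⟩ := π.ker.nonempty_mulEquiv_prod_quotient_of_coprime_factorial hcop
  exact ⟨e.trans (eG.symm.prodCongr eQ)⟩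
end

section
/- Let $a$, $b$, $C$ be natural numbers and suppose $G'$ is a subgroup of $(\mathbb{Z}/a)^b$ with index $[(\mathbb{Z}/a)^b : G'] \le C$. Then there exist a natural number $a'$ and a subgroup $G'' \le G'$ such that $G'' \cong (\mathbb{Z}/a')^b$ and $C! \cdot a' \ge a$. -/
/-- If `G'` is a subgroup of `(ℤ/a)ᵇ` of index at most `C`, then there are `a'`
and a subgroup `G'' ≤ G'` with `G'' ≅ (ℤ/a')ᵇ` and `C! * a' ≥ a`. -/
theorem stmt_2 (a b C : ℕ) (G' : AddSubgroup (Fin b → ZMod a))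
    (hG' : G'.index ≤ C) :
    ∃ (a' : ℕ) (G'' : AddSubgroup (Fin b → ZMod a)), G'' ≤ G' ∧
      Nonempty (G'' ≃+ (Fin b → ZMod a')) ∧ a ≤ C.factorial * a' := by
  rcases Nat.eq_zero_or_pos a with rfl | ha
  · exact ⟨1, ⊥, bot_le, ⟨AddEquiv.ofUnique⟩, by simp⟩
  haveI : NeZero a := ⟨ha.ne'⟩
  set m := G'.index with hm
  have hm0 : m ≠ 0 := G'.index_ne_zero_of_finite
  set d := Nat.gcd a m with hd
  have hd0 : 0 < d := Nat.gcd_pos_of_pos_left m ha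
  set a' := a / d with ha'
  have hda : d ∣ a := Nat.gcd_dvd_left a m
  have hdm : d ∣ m := Nat.gcd_dvd_right a m
  have haa' : a = d * a' := (Nat.mul_div_cancel' hda).symm
  have hmm : m = d * (m / d) := (Nat.mul_div_cancel' hdm).symm
  -- the additive hom ℤ →+ ZMod a,  k ↦ m * k
  set g : ℤ →+ ZMod a := (Int.castAddHom (ZMod a)).comp (AddMonoidHom.mulLeft (m : ℤ)) with hgdef
  have hgapp : ∀ k : ℤ, g k = ((m * k : ℤ) : ZMod a) := fun k => rfl
  have hadvd : a ∣ m * a' := ⟨m / d, by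
    conv_lhs => rw [hmm]
    conv_rhs => rw [haa']
    ring⟩
  have hg : g (a' : ℤ) = 0 := by
    rw [hgapp, ZMod.intCast_zmod_eq_zero_iff_dvd]
    exact_mod_cast hadvd
  set f : ZMod a' →+ ZMod a := ZMod.lift a' ⟨g, hg⟩ with hfdef
  have hf_inj : Function.Injective f := by
    rw [hfdef, ZMod.lift_injective]
    intro k hk
    rw [hgapp, ZMod.intCast_zmod_eq_zero_iff_dvd] at hk
    rw [ZMod.intCast_zmod_eq_zero_iff_dvd]
    -- from (a : ℤ) ∣ m * k deduce (a' : ℤ) ∣ k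
    have hmz : (m : ℤ) = (d : ℤ) * ((m / d : ℕ) : ℤ) := by exact_mod_cast hmm
    have haz : (a : ℤ) = (d : ℤ) * ((a' : ℕ) : ℤ) := by exact_mod_cast haa'
    have h1 : (a : ℤ) ∣ (d : ℤ) * (((m / d : ℕ) : ℤ) * k) := by
      rw [← mul_assoc, ← hmz]; exact hk
    rw [haz] at h1
    have h2 : ((a' : ℕ) : ℤ) ∣ ((m / d : ℕ) : ℤ) * k :=
      (mul_dvd_mul_iff_left (by exact_mod_cast hd0.ne' : (d : ℤ) ≠ 0)).mp h1
    have hcop : IsCoprime ((a' : ℕ) : ℤ) ((m / d : ℕ) : ℤ) := by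
      rw [Int.isCoprime_iff_gcd_eq_one, Int.gcd_natCast_natCast]
      exact Nat.coprime_div_gcd_div_gcd hd0
    exact hcop.dvd_of_dvd_mul_left h2
  set F : (Fin b → ZMod a') →+ (Fin b → ZMod a) := f.compLeft (Fin b) with hFdef
  have hF_inj : Function.Injective F := fun y z h => by
    funext i
    exact hf_inj (congrFun h i)
  refine ⟨a', F.range, ?_, ⟨(AddMonoidHom.ofInjective hF_inj).symm⟩, ?_⟩
  · rintro w ⟨y, rfl⟩
    have key : F y = m • fun i => ((ZMod.cast (y i) : ℤ) : ZMod a) := by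
      funext i
      show f (y i) = m • ((ZMod.cast (y i) : ℤ) : ZMod a)
      conv_lhs => rw [← ZMod.intCast_zmod_cast (y i)]
      rw [hfdef, ZMod.lift_coe, hgapp, nsmul_eq_mul]
      push_cast
      ring
    rw [key, hm]
    exact G'.nsmul_index_mem _
  · have hdC : d ≤ C.factorial := by
      calc d ≤ m := Nat.le_of_dvd (Nat.pos_of_ne_zero hm0) hdm
        _ ≤ C := hG'
        _ ≤ C.factorial := Nat.self_le_factorial C
    calc a = d * a' := haa'
      _ ≤ C.factorial * a' := Nat.mul_le_mul_right a' hdC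
end

section
/- Let $d$ and $r$ be natural numbers. There exists a natural number $C(d,r)$ such that whenever $1 \to K \to G \to A \to 1$ is a short exact sequence of groups with $|K| \le d$ and $A$ abelian and generated by $r$ elements, then $G$ has an abelian subgroup of index at most $C(d,r)$. -/
/-!
Since `G ⧸ K` is abelian, every commutator of `G` lies in `K`, so `G` has at most `d`
commutators, and `G` is generated by lifts of the `r` generators of `G ⧸ K` together with `K`,
that is by at most `r + d` elements. If `G` is generated by `T`, then `g ↦ (⁅g, t⁆)_{t ∈ T}`
embeds `G ⧸ center G` into `T → commutatorSet G`, so the center is an abelian subgroup of index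
at most `d ^ (r + d)`.
-/

universe u

open Subgroup

namespace Subgroup

variable {G : Type*} [Group G]

lemma index_center_le_pow_card [Finite (commutatorSet G)] {S : Set G} [Finite S]
    (hS : closure S = ⊤) : (center G).index ≤ Nat.card (commutatorSet G) ^ Nat.card S := by
  rw [index_eq_card, ← Nat.card_fun]
  exact Finite.card_le_of_embedding (quotientCenterEmbedding hS)

variable {K : Subgroup G} [K.Normal]

lemma commutatorSet_subset_of_isMulCommutative [IsMulCommutative (G ⧸ K)] :
    commutatorSet G ⊆ K := by
  have h := (Normal.quotient_commutative_iff_commutator_le (N := K)).mp ‹_›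
  rw [commutator_eq_closure] at h
  exact subset_closure.trans h

lemma closure_union_eq_top_of_closure_image_mk {T : Set G}
    (hT : closure ((↑) '' T : Set (G ⧸ K)) = ⊤) : closure (T ∪ K) = ⊤ := by
  have hmap : (closure T).map (QuotientGroup.mk' K) = ⊤ := by
    rw [MonoidHom.map_closure]
    exact hT
  rw [closure_union, closure_eq, ← QuotientGroup.ker_mk' K, ← comap_map_eq, hmap, comap_top]

lemma exists_finite_closure_eq_top_of_quotient [Finite K] {S : Finset (G ⧸ K)}
    (hS : closure (S : Set (G ⧸ K)) = ⊤) :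
    ∃ T : Set G, T.Finite ∧ closure T = ⊤ ∧ Nat.card T ≤ S.card + Nat.card K := by
  refine ⟨Quotient.out '' (S : Set (G ⧸ K)) ∪ K, Set.toFinite _,
    closure_union_eq_top_of_closure_image_mk (by simpa [Set.image_image] using hS), ?_⟩
  rw [Nat.card_coe_set_eq, ← Set.ncard_coe_finset]
  exact (Set.ncard_union_le _ _).trans
    (Nat.add_le_add_right (Set.ncard_image_le S.finite_toSet) _)

end Subgroup

/-- For all `d`, `r` there is a constant `C(d,r)` such that any group `G` fitting
in a short exact sequence `1 → K → G → A → 1` with `|K| ≤ d` and `A` abelian generated by `r`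
elements has an abelian subgroup of index at most `C(d,r)`. -/
theorem stmt_3 (d r : ℕ) :
    ∃ C : ℕ, ∀ (G : Type u) [Group G] (K : Subgroup G) [K.Normal],
      0 < Nat.card K → Nat.card K ≤ d →
      (∀ x y : G ⧸ K, x * y = y * x) →
      (∃ S : Finset (G ⧸ K), S.card ≤ r ∧ Subgroup.closure (S : Set (G ⧸ K)) = ⊤) →
      ∃ A : Subgroup G, (∀ x ∈ A, ∀ y ∈ A, x * y = y * x) ∧ A.index ≤ C := by
  refine ⟨d ^ (r + d), fun G _ K _ hK0 hKd hQ ⟨S, hSr, hS⟩ => ?_⟩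
  have : Finite K := Nat.finite_of_card_ne_zero hK0.ne'
  have : IsMulCommutative (G ⧸ K) := ⟨⟨hQ⟩⟩
  have hcomm : commutatorSet G ⊆ K := commutatorSet_subset_of_isMulCommutative
  have : Finite (commutatorSet G) := (Set.toFinite (K : Set G)).subset hcomm
  have hcomm_card : Nat.card (commutatorSet G) ≤ d :=
    (Nat.card_mono (Set.toFinite _) hcomm).trans hKd
  obtain ⟨T, hTfin, hT, hTcard⟩ := exists_finite_closure_eq_top_of_quotient hS
  have : Finite T := hTfin
  refine ⟨center G, fun x hx y _ => (mem_center_iff.mp hx y).symm, ?_⟩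
  calc (center G).index ≤ Nat.card (commutatorSet G) ^ Nat.card T := index_center_le_pow_card hT
    _ ≤ d ^ (r + d) := by gcongr <;> omega
end

section
/- Let $M$ be a closed manifold. Then $\mathrm{disc\text{-}sym}(M) = \max(\{P\mathrm{disc\text{-}sym}(M)\} \cup \{\mathrm{disc\text{-}sym}_p(M) : p \text{ prime}\})$. -/
open scoped Classical

/-- An effective action of the group `G` on the space `M` by homeomorphisms. -/
def EffAction (M : Type*) [TopologicalSpace M] (G : Type*) [Group G] : Prop :=
  ∃ φ : G →* Equiv.Perm M, Function.Injective φ ∧ ∀ g : G, Continuous (φ g)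

lemma effAction_of_injective {M : Type*} [TopologicalSpace M] {G H : Type*} [Group G] [Group H]
    (f : H →* G) (hf : Function.Injective f) (h : EffAction M G) : EffAction M H := by
  obtain ⟨φ, hφ, hc⟩ := h
  exact ⟨φ.comp f, hφ.comp hf, fun g => hc (f g)⟩

lemma zmod_dvd_embed {b a : ℕ} (hb : b ∣ a) (ha : a ≠ 0) :
    ∃ f : ZMod b →+ ZMod a, Function.Injective f := by
  obtain ⟨c, rfl⟩ := hb
  have hb0 : (b : ℤ) ≠ 0 := by exact_mod_cast fun h => ha (by simp [h])
  have hc0 : (c : ℤ) ≠ 0 := by exact_mod_cast fun h => ha (by simp [h])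
  have hgb : ((Int.castAddHom (ZMod (b * c))).comp (AddMonoidHom.mulLeft (c : ℤ))) (b : ℤ) = 0 := by
    simp only [AddMonoidHom.comp_apply, AddMonoidHom.coe_mulLeft, Int.coe_castAddHom]
    push_cast
    rw [mul_comm, ← Nat.cast_mul, mul_comm c b]
    exact ZMod.natCast_self (b * c)
  refine ⟨ZMod.lift b ⟨_, hgb⟩, ?_⟩
  rw [injective_iff_map_eq_zero]
  intro x hx
  obtain ⟨y, rfl⟩ := ZMod.intCast_surjective x
  rw [ZMod.lift_coe] at hx
  simp only [AddMonoidHom.comp_apply, AddMonoidHom.coe_mulLeft, Int.coe_castAddHom] at hx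
  rw [ZMod.intCast_zmod_eq_zero_iff_dvd] at hx
  have : ((c : ℤ) * b) ∣ (c : ℤ) * y := by
    refine dvd_trans (dvd_of_eq ?_) hx
    push_cast; ring
  rw [mul_dvd_mul_iff_left hc0] at this
  rw [ZMod.intCast_zmod_eq_zero_iff_dvd]
  exact this

lemma effAction_pi_of_dvd {M : Type*} [TopologicalSpace M] {r b a : ℕ} (hb : b ∣ a) (ha : a ≠ 0)
    (h : EffAction M (Fin r → Multiplicative (ZMod a))) :
    EffAction M (Fin r → Multiplicative (ZMod b)) := by
  obtain ⟨f, hf⟩ := zmod_dvd_embed hb ha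
  refine effAction_of_injective
    ((AddMonoidHom.toMultiplicative f).compLeft (Fin r)) ?_ h
  intro x y hxy
  funext i
  have := congrFun hxy i
  simp only [MonoidHom.compLeft_apply] at this
  exact hf this

/-- The key combinatorial step. -/
lemma hard_step {M : Type*} [TopologicalSpace M] {r : ℕ}
    (hA : ∀ N, ∃ a, N ≤ a ∧ EffAction M (Fin r → Multiplicative (ZMod a)))
    (hB : ¬ ∀ N, ∃ p, N ≤ p ∧ p.Prime ∧ EffAction M (Fin r → Multiplicative (ZMod p))) :
    ∃ p, p.Prime ∧ ∀ N, ∃ s, N ≤ s ∧ EffAction M (Fin r → Multiplicative (ZMod (p ^ s))) := by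
  by_contra hC
  push_neg at hB hC
  obtain ⟨N₀, hN₀⟩ := hB
  have hC' : ∀ p : ℕ, ∃ N : ℕ, p.Prime →
      ∀ s, N ≤ s → ¬ EffAction M (Fin r → Multiplicative (ZMod (p ^ s))) := by
    intro p
    by_cases hp : p.Prime
    · obtain ⟨N, hN⟩ := hC p hp
      exact ⟨N, fun _ s hs => hN s hs⟩
    · exact ⟨0, fun h => absurd h hp⟩
  choose f hf using hC'
  set K := ∏ p ∈ Finset.range N₀, (p ^ f p + 1) with hK
  obtain ⟨a, haK, haE⟩ := hA (K + 1)
  have ha0 : a ≠ 0 := by omega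
  have hstep1 : ∀ p ∈ a.primeFactors, p < N₀ := by
    intro p hp
    have hpp : p.Prime := Nat.prime_of_mem_primeFactors hp
    have hpd : p ∣ a := Nat.dvd_of_mem_primeFactors hp
    by_contra hlt
    exact hN₀ p (le_of_not_gt hlt) hpp (effAction_pi_of_dvd hpd ha0 haE)
  have hstep2 : ∀ p ∈ a.primeFactors, a.factorization p ≤ f p := by
    intro p hp
    have hpp : p.Prime := Nat.prime_of_mem_primeFactors hp
    by_contra hlt
    exact hf p hpp (a.factorization p) (le_of_not_ge hlt)
      (effAction_pi_of_dvd (Nat.ordProj_dvd a p) ha0 haE)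
  have : a ≤ K := by
    calc a = ∏ p ∈ a.primeFactors, p ^ a.factorization p := by
            conv_lhs => rw [← Nat.factorization_prod_pow_eq_self ha0]
            rw [Finsupp.prod, Nat.support_factorization]
      _ ≤ ∏ p ∈ a.primeFactors, (p ^ f p + 1) := by
            refine Finset.prod_le_prod' ?_
            intro p hp
            have hpp : p.Prime := Nat.prime_of_mem_primeFactors hp
            exact le_trans (Nat.pow_le_pow_right hpp.one_lt.le (hstep2 p hp)) (Nat.le_succ _)
      _ ≤ K := by
            refine Finset.prod_le_prod_of_subset_of_one_le' ?_ ?_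
            · intro p hp
              exact Finset.mem_range.mpr (hstep1 p hp)
            · intro p _ _
              exact Nat.succ_le_succ (Nat.zero_le _)
  omega

/-- The discrete degree of symmetry of `M`: the supremum of `0` together with all `r` such
that `(ℤ/a)ʳ` acts effectively on `M` for arbitrarily large `a`. -/
noncomputable def discSym (M : Type*) [TopologicalSpace M] : ℕ∞ :=
  sSup (insert 0 ((↑) '' {r : ℕ |
    ∀ N : ℕ, ∃ a : ℕ, N ≤ a ∧ EffAction M (Fin r → Multiplicative (ZMod a))}))

/-- `Pdisc-sym`: supremum of `0` and all `r` such that `(ℤ/p)ʳ` acts effectively on `M`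
for arbitrarily large primes `p`. -/
noncomputable def PdiscSym (M : Type*) [TopologicalSpace M] : ℕ∞ :=
  sSup (insert 0 ((↑) '' {r : ℕ |
    ∀ N : ℕ, ∃ p : ℕ, N ≤ p ∧ p.Prime ∧ EffAction M (Fin r → Multiplicative (ZMod p))}))

/-- `disc-symₚ`: supremum of `0` and all `r` such that `(ℤ/pˢ)ʳ` acts effectively on `M`
for arbitrarily large `s`. -/
noncomputable def discSymP (M : Type*) [TopologicalSpace M] (p : ℕ) : ℕ∞ :=
  sSup (insert 0 ((↑) '' {r : ℕ |
    ∀ N : ℕ, ∃ s : ℕ, N ≤ s ∧ EffAction M (Fin r → Multiplicative (ZMod (p ^ s)))}))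

/-- For a closed manifold `M`,
`disc-sym M = max (Pdisc-sym M) (sup over primes p of disc-symₚ M)`. -/
theorem stmt_4 {n : ℕ} (M : Type*) [TopologicalSpace M]
    [ChartedSpace (EuclideanSpace ℝ (Fin n)) M] [CompactSpace M] :
    discSym M =
      max (PdiscSym M) (sSup {x : ℕ∞ | ∃ p : ℕ, p.Prime ∧ x = discSymP M p}) := by
  apply le_antisymm
  · apply sSup_le
    rintro x hx
    rcases Set.mem_insert_iff.mp hx with rfl | ⟨r, hr, rfl⟩
    · exact zero_le
    · by_cases hB : ∀ N, ∃ p, N ≤ p ∧ p.Prime ∧ EffAction M (Fin r → Multiplicative (ZMod p))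
      · have hmem : (r : ℕ∞) ∈ ((↑) '' {r : ℕ | ∀ N : ℕ, ∃ p : ℕ, N ≤ p ∧ p.Prime ∧
            EffAction M (Fin r → Multiplicative (ZMod p))} : Set ℕ∞) := ⟨r, hB, rfl⟩
        exact le_trans (le_sSup (Set.mem_insert_of_mem _ hmem)) (le_max_left _ _)
      · obtain ⟨p, hp, hCp⟩ := hard_step hr hB
        refine le_trans ?_ (le_max_right _ _)
        have hmem : (r : ℕ∞) ∈ ((↑) '' {r : ℕ | ∀ N : ℕ, ∃ s : ℕ, N ≤ s ∧
            EffAction M (Fin r → Multiplicative (ZMod (p ^ s)))} : Set ℕ∞) := ⟨r, hCp, rfl⟩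
        exact le_trans (le_sSup (Set.mem_insert_of_mem _ hmem)) (le_sSup ⟨p, hp, rfl⟩)
  · apply max_le
    · apply sSup_le_sSup
      apply Set.insert_subset_insert
      apply Set.image_mono
      intro r hr N
      obtain ⟨p, hp, _, hE⟩ := hr N
      exact ⟨p, hp, hE⟩
    · apply sSup_le
      rintro x ⟨p, hp, rfl⟩
      apply sSup_le_sSup
      apply Set.insert_subset_insert
      apply Set.image_mono
      intro r hr N
      obtain ⟨s, hs, hE⟩ := hr N
      refine ⟨p ^ s, ?_, hE⟩
      calc N ≤ s := hs
        _ ≤ 2 ^ s := Nat.le_of_lt (Nat.lt_two_pow_self (n := s))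
        _ ≤ p ^ s := Nat.pow_le_pow_left hp.two_le s
end

section
/- Let $f: M \to M'$ and $g: M' \to M''$ be exporting maps between closed oriented manifolds with constants $C$ and $D$ respectively, and suppose both have non-zero degree. Then $g \circ f: M \to M''$ is an exporting map with constant $C \cdot D$. -/
open CategoryTheory

/-- The singular chain complex with coefficients in `k`. -/
noncomputable def singChains (k : Type) [CommRing k] : TopCat.{0} ⥤ ChainComplex (ModuleCat k) ℕ :=
  TopCat.toSSet ⋙ ((SimplicialObject.whiskering _ _).obj (ModuleCat.free k)) ⋙
    AlgebraicTopology.alternatingFaceMapComplex (ModuleCat k)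

/-- Singular homology with coefficients in `k`. -/
noncomputable def SingH (k : Type) [CommRing k] (n : ℕ) : TopCat.{0} ⥤ ModuleCat k :=
  singChains k ⋙ HomologicalComplex.homologyFunctor _ _ n

/-- `μ` is a fundamental class in degree `n`: it is a `ℤ`-basis of `Hₙ(X;ℤ)`
(so `Hₙ(X;ℤ) ≅ ℤ` with generator `μ`); this encodes an orientation of a closed `n`-manifold. -/
def IsFundClass {X : Type} [TopologicalSpace X] (n : ℕ)
    (μ : (SingH ℤ n).obj (TopCat.of X)) : Prop :=
  ∀ c : (SingH ℤ n).obj (TopCat.of X), ∃! k : ℤ, c = k • μ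

/-- `f` has degree `d` with respect to the fundamental classes `μX`, `μY`. -/
def HasDeg {X Y : Type} [TopologicalSpace X] [TopologicalSpace Y] (n : ℕ)
    (μX : (SingH ℤ n).obj (TopCat.of X)) (μY : (SingH ℤ n).obj (TopCat.of Y))
    (f : C(X, Y)) (d : ℤ) : Prop :=
  (SingH ℤ n).map (show TopCat.of X ⟶ TopCat.of Y from TopCat.ofHom f) μX = d • μY

/-- `f : M → M'` exports group actions with constant `C`: every finite group `G` acting
effectively on `M` has a subgroup `H` of index at most `C`, an action of `H` on `M'` by
homeomorphisms, and an `H`-equivariant map homotopic to `f`. -/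
def IsExportingWith {M M' : Type} [TopologicalSpace M] [TopologicalSpace M']
    (C : ℕ) (f : C(M, M')) : Prop :=
  ∀ (G : Type) [Group G] [Finite G] (φ : G →* Equiv.Perm M),
    Function.Injective φ → (∀ g : G, Continuous (φ g)) →
    ∃ (H : Subgroup G) (φ' : H →* Equiv.Perm M') (fH : C(M, M')),
      H.index ≤ C ∧ (∀ h : H, Continuous (φ' h)) ∧ fH.Homotopic f ∧
      ∀ (h : H) (x : M), fH (φ (h : G) x) = φ' h (fH x)

/-- the composition of two non-zero degree exporting maps between closed
oriented `n`-manifolds, with constants `C` and `D`, is an exporting map with constant `C * D`. -/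
theorem stmt_6 {n : ℕ} (M M' M'' : Type)
    [TopologicalSpace M] [ChartedSpace (EuclideanSpace ℝ (Fin n)) M] [CompactSpace M]
    [TopologicalSpace M'] [ChartedSpace (EuclideanSpace ℝ (Fin n)) M'] [CompactSpace M']
    [TopologicalSpace M''] [ChartedSpace (EuclideanSpace ℝ (Fin n)) M''] [CompactSpace M'']
    (μ : (SingH ℤ n).obj (TopCat.of M)) (μ' : (SingH ℤ n).obj (TopCat.of M'))
    (μ'' : (SingH ℤ n).obj (TopCat.of M''))
    (hμ : IsFundClass n μ) (hμ' : IsFundClass n μ') (hμ'' : IsFundClass n μ'')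
    (f : C(M, M')) (g : C(M', M'')) (C D : ℕ)
    (hf : IsExportingWith C f) (hg : IsExportingWith D g)
    (hdf : ∃ d : ℤ, d ≠ 0 ∧ HasDeg n μ μ' f d)
    (hdg : ∃ d : ℤ, d ≠ 0 ∧ HasDeg n μ' μ'' g d) :
    IsExportingWith (C * D) (g.comp f) := by
  intro G _ _ φ hinj hcont
  obtain ⟨H, φ', fH, hHC, hφ'cont, hfHf, hfHeq⟩ := hf G φ hinj hcont
  haveI : Finite ↥φ'.range := by
    have h1 : ((φ'.range : Subgroup (Equiv.Perm M')) : Set (Equiv.Perm M')).Finite := by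
      rw [MonoidHom.coe_range]; exact Set.finite_range φ'
    exact h1.to_subtype
  obtain ⟨H', φ'', gH, hHD, hφ''cont, hgHg, hgHeq⟩ :=
    hg ↥φ'.range φ'.range.subtype φ'.range.subtype_injective
      (by rintro ⟨-, h, rfl⟩; exact hφ'cont h)
  set ψ : H →* ↥φ'.range := φ'.rangeRestrict with hψ
  set K₀ : Subgroup ↥H := H'.comap ψ with hK₀
  set e := Subgroup.equivMapOfInjective K₀ H.subtype H.subtype_injective with he
  set θ : ↥(K₀.map H.subtype) →* ↥H' :=
    ((ψ.comp K₀.subtype).codRestrict H' (fun x => x.2)).comp e.symm.toMonoidHom with hθ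
  refine ⟨K₀.map H.subtype, φ''.comp θ, gH.comp fH, ?_, ?_, ?_, ?_⟩
  · have h2 : (K₀.map H.subtype).index = K₀.index * H.index := by
      rw [Subgroup.index_map, Subgroup.ker_subtype, Subgroup.range_subtype, sup_bot_eq]
    rw [h2, hK₀, Subgroup.index_comap_of_surjective _ φ'.rangeRestrict_surjective]
    calc H'.index * H.index ≤ D * C := Nat.mul_le_mul hHD hHC
      _ = C * D := Nat.mul_comm D C
  · intro h; exact hφ''cont (θ h)
  · exact ContinuousMap.Homotopic.comp hgHg hfHf
  · intro h x
    set h₀ : ↥K₀ := e.symm h with hh₀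
    have hcoe : (h : G) = ((h₀ : ↥H) : G) := by
      conv_lhs => rw [← e.apply_symm_apply h]
      rfl
    have step1 : fH (φ (h : G) x) = φ' (h₀ : ↥H) (fH x) := by
      rw [hcoe]; exact hfHeq _ x
    have hmem : ψ (h₀ : ↥H) ∈ H' := h₀.2
    have step2 : gH (φ'.range.subtype ((⟨ψ (h₀ : ↥H), hmem⟩ : ↥H') : ↥φ'.range) (fH x))
        = φ'' ⟨ψ (h₀ : ↥H), hmem⟩ (gH (fH x)) := hgHeq _ _
    have hsub : φ'.range.subtype ((⟨ψ (h₀ : ↥H), hmem⟩ : ↥H') : ↥φ'.range) = φ' (h₀ : ↥H) := rfl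
    show gH (fH (φ (h : G) x)) = φ'' (θ h) (gH (fH x))
    rw [step1, ← hsub, step2]
    rfl
end

section
/- Let $M$ be a connected manifold, $f: M \to S^1$ continuous, $\theta$ a generator of $H^1(S^1, \mathbb{Z})$, and $H$ a finite group of order $r$ acting effectively on $M$ with $\phi_h^* (f^*\theta) = f^*\theta$ for all $h \in H$. Then there exist a group homomorphism $\mu: H \to \mathbb{Z}/r$ and a $\mu$-equivariant continuous map $f_H: M \to S^1$ (where $\mathbb{Z}/r$ acts on $S^1$ by rotations) with $f_H^*\theta = f^*\theta$; in particular $f_H$ is homotopic to $f$ when $M$ has the homotopy type of a CW complex. -/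
open Set

local instance : Fact ((0:ℝ) < 1) := ⟨one_pos⟩

lemma coe_diff_int (y y' : ℝ) (h : (y : AddCircle (1:ℝ)) = (y' : ℝ)) : ∃ k : ℤ, y - y' = k := by
  obtain ⟨k, hk⟩ := AddSubgroup.mem_zmultiples_iff.mp ((QuotientAddGroup.eq_iff_sub_mem).mp h)
  simp only [zsmul_eq_mul, mul_one] at hk
  exact ⟨k, hk.symm⟩

lemma eq_of_coe_eq (y y' : ℝ) (h : (y : AddCircle (1:ℝ)) = (y' : ℝ)) (hlt : |y - y'| < 1) : y = y' := by
  obtain ⟨k, hk⟩ := coe_diff_int y y' h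
  rw [hk] at hlt
  have : k = 0 := by
    have : |k| < 1 := by exact_mod_cast (by simpa using hlt : (|k| : ℝ) < 1)
    have h2 := abs_lt.mp this; omega
  subst this; simp at hk; linarith

noncomputable def ee (z : AddCircle (1:ℝ)) : ℝ := (AddCircle.equivIco 1 (-(2⁻¹)) z : ℝ)

lemma ee_coe (z : AddCircle (1:ℝ)) : ((ee z : ℝ) : AddCircle (1:ℝ)) = z :=
  (AddCircle.equivIco 1 (-(2⁻¹))).symm_apply_apply z

lemma ee_mem (z : AddCircle (1:ℝ)) : ee z ∈ Ico (-(2⁻¹):ℝ) 2⁻¹ := by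
  have := (AddCircle.equivIco 1 (-(2⁻¹)) z).2
  simpa [ee, (by norm_num : -(2⁻¹:ℝ) + 1 = 2⁻¹)] using this

lemma round_eq_zero_of_mem {y : ℝ} (h : y ∈ Ico (-(2⁻¹):ℝ) 2⁻¹) : round y = 0 := by
  rw [round_eq, Int.floor_eq_zero_iff]
  constructor
  · simpa using by linarith [h.1]
  · simpa using by linarith [h.2]

lemma abs_ee (z : AddCircle (1:ℝ)) : |ee z| = ‖z‖ := by
  conv_rhs => rw [← ee_coe z]
  rw [AddCircle.norm_eq]
  simp [round_eq_zero_of_mem (ee_mem z)]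

lemma ee_zero : ee (0 : AddCircle (1:ℝ)) = 0 := by
  have := abs_ee (0 : AddCircle (1:ℝ))
  rw [norm_zero] at this
  exact abs_eq_zero.mp this

lemma norm_coe_le (y : ℝ) : ‖((y : ℝ) : AddCircle (1:ℝ))‖ ≤ |y| := by
  simpa using (QuotientAddGroup.norm_mk_le_norm (S := AddSubgroup.zmultiples (1:ℝ)) (m := y))

lemma ne_half_of_norm_lt {z : AddCircle (1:ℝ)} (h : ‖z‖ < 2⁻¹) :
    z ≠ ((-(2⁻¹) : ℝ) : AddCircle (1:ℝ)) := by
  intro hz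
  rw [hz] at h
  have h1 : ((-(2⁻¹) : ℝ) : AddCircle (1:ℝ)) = -(((2⁻¹:ℝ)) : AddCircle (1:ℝ)) := rfl
  rw [h1, norm_neg] at h
  rw [(by norm_num : ((2⁻¹ : ℝ) : AddCircle (1:ℝ)) = (((1:ℝ)/2 : ℝ) : AddCircle (1:ℝ))),
    AddCircle.norm_half_period_eq (1:ℝ)] at h
  norm_num at h

lemma continuousAt_ee {z : AddCircle (1:ℝ)} (hz : ‖z‖ < 2⁻¹) : ContinuousAt ee z :=
  continuous_subtype_val.continuousAt.comp
    (AddCircle.continuousAt_equivIco 1 (-(2⁻¹)) (ne_half_of_norm_lt hz))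

lemma abs_le_quarter (y : ℝ) (hy : |y| ≤ 2⁻¹) (hz : ‖((y : ℝ) : AddCircle (1:ℝ))‖ ≤ 4⁻¹) :
    |y| ≤ 4⁻¹ := by
  have h1 : y = ee ((y : ℝ) : AddCircle (1:ℝ)) := by
    refine eq_of_coe_eq _ _ (by rw [ee_coe]) ?_
    have habs : |ee ((y : ℝ) : AddCircle (1:ℝ))| ≤ 4⁻¹ := by rw [abs_ee]; exact hz
    have h3 : |y - ee ((y : ℝ) : AddCircle (1:ℝ))| ≤ |y| + |ee ((y : ℝ) : AddCircle (1:ℝ))| := by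
      rw [sub_eq_add_neg]; simpa using abs_add_le y (-(ee ((y : ℝ) : AddCircle (1:ℝ))))
    linarith
  rw [h1, abs_ee]; exact hz

attribute [irreducible] ee

section StepLift

variable {X : Type} [TopologicalSpace X]

noncomputable def stepLift (κ : X → C(ℝ, AddCircle (1:ℝ))) (n : ℕ) (x : X) : ℕ → ℝ
  | 0 => 0
  | (j+1) => stepLift κ n x j + ee (κ x (((j:ℝ)+1)/n) - κ x ((j:ℝ)/n))

def Fine (κ : X → C(ℝ, AddCircle (1:ℝ))) (n : ℕ) (x : X) : Prop :=
  ∀ t t' : ℝ, |t - t'| ≤ 1 / n → ‖κ x t - κ x t'‖ ≤ 4⁻¹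

lemma stepLift_coe (κ : X → C(ℝ, AddCircle (1:ℝ))) (n : ℕ) (x : X) (h0 : κ x 0 = 0) (j : ℕ) :
    ((stepLift κ n x j : ℝ) : AddCircle (1:ℝ)) = κ x ((j:ℝ)/n) := by
  induction j with
  | zero => simpa [stepLift] using h0.symm
  | succ j ih =>
      show (((stepLift κ n x j + ee (κ x (((j:ℝ)+1)/n) - κ x ((j:ℝ)/n))) : ℝ) : AddCircle (1:ℝ)) = _
      have : (((stepLift κ n x j + ee (κ x (((j:ℝ)+1)/n) - κ x ((j:ℝ)/n))) : ℝ) : AddCircle (1:ℝ))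
          = ((stepLift κ n x j : ℝ) : AddCircle (1:ℝ))
            + ((ee (κ x (((j:ℝ)+1)/n) - κ x ((j:ℝ)/n)) : ℝ) : AddCircle (1:ℝ)) := rfl
      rw [this, ih, ee_coe]
      push_cast
      ring_nf
      abel

lemma stepLift_succ (κ : X → C(ℝ, AddCircle (1:ℝ))) (n : ℕ) (x : X) (j : ℕ) :
    stepLift κ n x (j+1) = stepLift κ n x j + ee (κ x (((j:ℝ)+1)/n) - κ x ((j:ℝ)/n)) := rfl

lemma stepLift_consistent (κ : X → C(ℝ, AddCircle (1:ℝ))) {n m : ℕ} (hn : 1 ≤ n) (hm : 1 ≤ m)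
    (x : X) (h0 : κ x 0 = 0) (hfine : Fine κ n x) :
    ∀ j, stepLift κ (n*m) x (j*m) = stepLift κ n x j := by
  have hn0 : (0:ℝ) < (n:ℝ) := by exact_mod_cast hn
  have hm0 : (0:ℝ) < (m:ℝ) := by exact_mod_cast hm
  have key : ∀ a b : ℕ, a ≤ b → b ≤ a + m →
      ‖κ x ((b:ℝ)/((n:ℝ)*(m:ℝ))) - κ x ((a:ℝ)/((n:ℝ)*(m:ℝ)))‖ ≤ 4⁻¹ := by
    intro a b hab hba
    apply hfine
    have hab' : (a:ℝ) ≤ (b:ℝ) := by exact_mod_cast hab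
    have hba' : (b:ℝ) ≤ (a:ℝ) + (m:ℝ) := by exact_mod_cast hba
    rw [abs_of_nonneg (sub_nonneg.mpr (by gcongr))]
    rw [div_sub_div_same, div_le_div_iff₀ (by positivity) hn0]
    nlinarith
  -- the fine-scale increments stay small within a block
  have hdelta : ∀ a : ℕ, ∀ i : ℕ, i ≤ m →
      |stepLift κ (n*m) x (a*m + i) - stepLift κ (n*m) x (a*m)| ≤ 4⁻¹ := by
    intro a i him
    induction i with
    | zero => simp
    | succ i ih =>
        have him' : i ≤ m := Nat.le_of_succ_le him
        have hIH := ih him'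
        have hstep : stepLift κ (n*m) x (a*m + i + 1) = stepLift κ (n*m) x (a*m + i)
            + ee (κ x ((((a*m+i:ℕ):ℝ)+1)/((n*m:ℕ):ℝ)) - κ x (((a*m+i:ℕ):ℝ)/((n*m:ℕ):ℝ))) :=
          stepLift_succ κ (n*m) x (a*m+i)
        have hnm : ((n*m:ℕ):ℝ) = (n:ℝ)*(m:ℝ) := by push_cast; ring
        have hee : |ee (κ x ((((a*m+i:ℕ):ℝ)+1)/((n*m:ℕ):ℝ)) - κ x (((a*m+i:ℕ):ℝ)/((n*m:ℕ):ℝ)))| ≤ 4⁻¹ := by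
          rw [abs_ee]
          have := key (a*m+i) (a*m+i+1) (Nat.le_succ _) (by omega)
          rw [hnm]
          convert this using 4
          push_cast; ring
        have habs : |stepLift κ (n*m) x (a*m + i + 1) - stepLift κ (n*m) x (a*m)| ≤ 2⁻¹ := by
          rw [hstep]
          calc |_| ≤ |stepLift κ (n*m) x (a*m + i) - stepLift κ (n*m) x (a*m)|
              + |ee (κ x ((((a*m+i:ℕ):ℝ)+1)/((n*m:ℕ):ℝ)) - κ x (((a*m+i:ℕ):ℝ)/((n*m:ℕ):ℝ)))| := by
                rw [show stepLift κ (n*m) x (a*m + i)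
                    + ee (κ x ((((a*m+i:ℕ):ℝ)+1)/((n*m:ℕ):ℝ)) - κ x (((a*m+i:ℕ):ℝ)/((n*m:ℕ):ℝ)))
                    - stepLift κ (n*m) x (a*m)
                    = (stepLift κ (n*m) x (a*m + i) - stepLift κ (n*m) x (a*m))
                    + ee (κ x ((((a*m+i:ℕ):ℝ)+1)/((n*m:ℕ):ℝ)) - κ x (((a*m+i:ℕ):ℝ)/((n*m:ℕ):ℝ))) from by ring]
                exact abs_add_le _ _
          _ ≤ 2⁻¹ := by linarith
        have hcoe : ((stepLift κ (n*m) x (a*m + i + 1) - stepLift κ (n*m) x (a*m) : ℝ) : AddCircle (1:ℝ))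
            = κ x (((a*m+i+1:ℕ):ℝ)/((n*m:ℕ):ℝ)) - κ x (((a*m:ℕ):ℝ)/((n*m:ℕ):ℝ)) := by
          have e1 := stepLift_coe κ (n*m) x h0 (a*m+i+1)
          have e2 := stepLift_coe κ (n*m) x h0 (a*m)
          show ((stepLift κ (n*m) x (a*m+i+1) : ℝ) : AddCircle (1:ℝ))
              - ((stepLift κ (n*m) x (a*m) : ℝ) : AddCircle (1:ℝ)) = _
          rw [e1, e2]
        have hnorm : ‖((stepLift κ (n*m) x (a*m + i + 1) - stepLift κ (n*m) x (a*m) : ℝ) : AddCircle (1:ℝ))‖ ≤ 4⁻¹ := by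
          rw [hcoe]
          have hnm : ((n*m:ℕ):ℝ) = (n:ℝ)*(m:ℝ) := by push_cast; ring
          rw [hnm]
          exact key (a*m) (a*m+i+1) (by omega) (by omega)
        have := abs_le_quarter _ habs hnorm
        exact this
  -- block equality
  intro j
  induction j with
  | zero => simp [stepLift]
  | succ j ih =>
      have hnm : ((n*m:ℕ):ℝ) = (n:ℝ)*(m:ℝ) := by push_cast; ring
      set z := κ x (((j:ℝ)+1)/(n:ℝ)) - κ x ((j:ℝ)/(n:ℝ)) with hz
      have hcoeB : ((stepLift κ (n*m) x (j*m + m) - stepLift κ (n*m) x (j*m) : ℝ) : AddCircle (1:ℝ)) = z := by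
        have e1 := stepLift_coe κ (n*m) x h0 (j*m+m)
        have e2 := stepLift_coe κ (n*m) x h0 (j*m)
        have t1 : ((j*m+m:ℕ):ℝ)/((n*m:ℕ):ℝ) = ((j:ℝ)+1)/(n:ℝ) := by
          rw [hnm]; push_cast; field_simp
        have t2 : ((j*m:ℕ):ℝ)/((n*m:ℕ):ℝ) = (j:ℝ)/(n:ℝ) := by
          rw [hnm]; push_cast; field_simp
        show ((stepLift κ (n*m) x (j*m+m) : ℝ) : AddCircle (1:ℝ))
            - ((stepLift κ (n*m) x (j*m) : ℝ) : AddCircle (1:ℝ)) = _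
        rw [e1, e2, t1, t2]
      have hzn : ‖z‖ ≤ 4⁻¹ := by
        apply hfine
        have hq : ((j:ℝ)+1)/(n:ℝ) - (j:ℝ)/(n:ℝ) = 1/(n:ℝ) := by
          field_simp; ring
        rw [hq, abs_of_nonneg (by positivity)]
      have hD : stepLift κ (n*m) x (j*m + m) - stepLift κ (n*m) x (j*m) = ee z := by
        apply eq_of_coe_eq
        · rw [hcoeB, ee_coe]
        · have h1 := hdelta j m (le_refl m)
          have h2 : |ee z| ≤ 4⁻¹ := by rw [abs_ee]; exact hzn
          calc |stepLift κ (n*m) x (j*m + m) - stepLift κ (n*m) x (j*m) - ee z|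
              ≤ |stepLift κ (n*m) x (j*m + m) - stepLift κ (n*m) x (j*m)| + |ee z| := by
                rw [sub_eq_add_neg _ (ee z)]
                calc |_| ≤ _ := abs_add_le _ _
                _ = _ := by rw [abs_neg]
          _ < 1 := by linarith
      have hidx : (j+1)*m = j*m + m := by ring
      rw [hidx]
      have : stepLift κ (n*m) x (j*m + m) = stepLift κ (n*m) x (j*m) + ee z := by linarith [hD]
      rw [this, ih, stepLift_succ]

lemma stepLift_indep (κ : X → C(ℝ, AddCircle (1:ℝ))) {n n' : ℕ} (hn : 1 ≤ n) (hn' : 1 ≤ n')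
    (x : X) (h0 : κ x 0 = 0) (hf : Fine κ n x) (hf' : Fine κ n' x) :
    stepLift κ n x n = stepLift κ n' x n' := by
  have h1 := stepLift_consistent κ hn hn' x h0 hf n
  have h2 := stepLift_consistent κ hn' hn x h0 hf' n'
  rw [Nat.mul_comm n' n] at h2
  exact h1.symm.trans h2

lemma continuousAt_ee_comp {Y : Type} [TopologicalSpace Y] {d : Y → AddCircle (1:ℝ)} {x : Y}
    (h1 : ContinuousAt ee (d x)) (h2 : ContinuousAt d x) :
    ContinuousAt (fun y => ee (d y)) x :=
  ContinuousAt.comp h1 h2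

lemma stepLift_continuousAt (κ : X → C(ℝ, AddCircle (1:ℝ))) {n : ℕ} (hn : 1 ≤ n) (x₀ : X)
    (hc : ∀ t : ℝ, ContinuousAt (fun x => κ x t) x₀) (hf : Fine κ n x₀) :
    ∀ j : ℕ, ContinuousAt (fun x => stepLift κ n x j) x₀ := by
  have hn0 : (0:ℝ) < (n:ℝ) := by exact_mod_cast hn
  intro j
  induction j with
  | zero => exact continuousAt_const
  | succ j ih =>
      have hd : ContinuousAt (fun x => κ x (((j:ℝ)+1)/n) - κ x ((j:ℝ)/n)) x₀ :=
        (hc (((j:ℝ)+1)/n)).sub (hc ((j:ℝ)/n))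
      have hsmall : ‖κ x₀ (((j:ℝ)+1)/n) - κ x₀ ((j:ℝ)/n)‖ < 2⁻¹ := by
        have := hf (((j:ℝ)+1)/n) ((j:ℝ)/n) (by
          have hq : ((j:ℝ)+1)/(n:ℝ) - (j:ℝ)/(n:ℝ) = 1/(n:ℝ) := by field_simp; ring
          rw [hq, abs_of_nonneg (by positivity)])
        linarith
      have hee : ContinuousAt ee (κ x₀ (((j:ℝ)+1)/n) - κ x₀ ((j:ℝ)/n)) := continuousAt_ee hsmall
      show ContinuousAt (fun x => stepLift κ n x j + ee (κ x (((j:ℝ)+1)/n) - κ x ((j:ℝ)/n))) x₀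
      exact ih.add (continuousAt_ee_comp hee hd)

end StepLift

lemma exists_lift {X : Type} [TopologicalSpace X] (g : C(X, AddCircle (1:ℝ)))
    (hnh : (ContinuousMap.const X (0:AddCircle (1:ℝ))).Homotopic g) :
    ∃ δ : C(X, ℝ), ∀ x, ((δ x : ℝ) : AddCircle (1:ℝ)) = g x := by
  obtain ⟨K⟩ := hnh
  let κ₀ : C(X, C(unitInterval, AddCircle (1:ℝ))) :=
    (K.toContinuousMap.comp ContinuousMap.prodSwap).curry
  let pI : C(ℝ, unitInterval) := ⟨Set.projIcc 0 1 zero_le_one, continuous_projIcc⟩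
  let κ : X → C(ℝ, AddCircle (1:ℝ)) := fun x => (κ₀ x).comp pI
  have hκ₀app : ∀ (x : X) (s : unitInterval), κ₀ x s = K (s, x) := fun x s => rfl
  have hκapp : ∀ (x : X) (t : ℝ), κ x t = K (Set.projIcc 0 1 zero_le_one t, x) := fun x t => rfl
  have hκ0 : ∀ x, κ x 0 = 0 := by
    intro x
    rw [hκapp, Set.projIcc_left]
    have : K ((⟨0, by norm_num⟩ : unitInterval), x) = (ContinuousMap.const X (0:AddCircle (1:ℝ))) x :=
      K.apply_zero x
    simpa using this
  have hκ1 : ∀ x, κ x 1 = g x := by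
    intro x
    rw [hκapp, Set.projIcc_right]
    have : K ((⟨1, by norm_num⟩ : unitInterval), x) = g x := K.apply_one x
    simpa using this
  have hct : ∀ t : ℝ, Continuous (fun x => κ x t) := by
    intro t
    exact (continuous_eval_const (pI t)).comp κ₀.continuous
  have hfineEx : ∀ x₀ : X, ∃ n : ℕ, 1 ≤ n ∧ ∃ U ∈ nhds x₀, ∀ x ∈ U, Fine κ n x := by
    intro x₀
    have huc := CompactSpace.uniformContinuous_of_continuous (κ₀ x₀).continuous
    rw [Metric.uniformContinuous_iff] at huc
    obtain ⟨d, hd, hduc⟩ := huc 8⁻¹ (by norm_num)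
    obtain ⟨n, hnd⟩ := exists_nat_gt (1/d)
    have hn1 : 1 ≤ n := by
      rcases Nat.eq_zero_or_pos n with hh|hh
      · subst hh
        simp only [Nat.cast_zero] at hnd
        have : (0:ℝ) < 1/d := by positivity
        linarith
      · exact hh
    have hn0 : (0:ℝ) < n := by exact_mod_cast hn1
    have h1n : 1/(n:ℝ) < d := by
      rw [div_lt_iff₀ hn0]
      rw [div_lt_iff₀ hd] at hnd
      linarith
    refine ⟨n, hn1, {x | dist (κ₀ x) (κ₀ x₀) < 16⁻¹}, ?_, ?_⟩
    · refine IsOpen.mem_nhds ?_ (by simp)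
      exact isOpen_lt (κ₀.continuous.dist continuous_const) continuous_const
    · intro x hx t t' htt
      simp only [Set.mem_setOf_eq] at hx
      set s := pI t with hs
      set s' := pI t' with hs'
      have hss : dist s s' ≤ |t - t'| := by
        have := (LipschitzWith.projIcc (zero_le_one : (0:ℝ) ≤ 1)).dist_le_mul t t'
        change dist (Set.projIcc 0 1 zero_le_one t) (Set.projIcc 0 1 zero_le_one t') ≤ |t - t'|
        simpa [Subtype.dist_eq, Real.dist_eq] using this
      have hsd : dist s s' < d := lt_of_le_of_lt (hss.trans htt) h1n
      have h1 : dist (κ₀ x₀ s) (κ₀ x₀ s') < 8⁻¹ := hduc hsd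
      have h2 : dist (κ₀ x s) (κ₀ x₀ s) ≤ dist (κ₀ x) (κ₀ x₀) :=
        ContinuousMap.dist_apply_le_dist s
      have h3 : dist (κ₀ x₀ s') (κ₀ x s') ≤ dist (κ₀ x) (κ₀ x₀) := by
        rw [dist_comm (κ₀ x₀ s')]
        exact ContinuousMap.dist_apply_le_dist s'
      have h4 : dist (κ x t) (κ x t') ≤ dist (κ₀ x s) (κ₀ x₀ s) + dist (κ₀ x₀ s) (κ₀ x₀ s')
          + dist (κ₀ x₀ s') (κ₀ x s') := dist_triangle4 _ _ _ _
      rw [← dist_eq_norm]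
      refine le_of_lt ?_
      calc dist (κ x t) (κ x t') ≤ _ := h4
      _ < 16⁻¹ + 8⁻¹ + 16⁻¹ := by
          have := lt_of_le_of_lt h2 hx
          have := lt_of_le_of_lt h3 hx
          linarith
      _ = 4⁻¹ := by norm_num
  choose N hN1 U hU hUfine using hfineEx
  have hselffine : ∀ x : X, Fine κ (N x) x := fun x => hUfine x x (mem_of_mem_nhds (hU x))
  let δ : X → ℝ := fun x => stepLift κ (N x) x (N x)
  have hδcont : Continuous δ := by
    rw [continuous_iff_continuousAt]
    intro x₀
    have hsc := stepLift_continuousAt κ (hN1 x₀) x₀ (fun t => (hct t).continuousAt)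
      (hselffine x₀) (N x₀)
    have heq : ∀ᶠ x in nhds x₀, stepLift κ (N x₀) x (N x₀) = δ x := by
      filter_upwards [hU x₀] with x hx
      exact (stepLift_indep κ (hN1 x) (hN1 x₀) x (hκ0 x) (hselffine x) (hUfine x₀ x hx)).symm
    exact hsc.congr heq
  refine ⟨⟨δ, hδcont⟩, ?_⟩
  intro x
  have hc := stepLift_coe κ (N x) x (hκ0 x) (N x)
  have hNx : ((N x : ℕ):ℝ)/((N x : ℕ):ℝ) = 1 := by
    have : (0:ℝ) < (N x : ℝ) := by exact_mod_cast hN1 x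
    exact div_self (ne_of_gt this)
  show ((δ x : ℝ) : AddCircle (1:ℝ)) = g x
  rw [show ((δ x : ℝ) : AddCircle (1:ℝ)) = ((stepLift κ (N x) x (N x) : ℝ) : AddCircle (1:ℝ)) from rfl,
    hc, hNx, hκ1]

lemma coe_int_eq_zero (q : ℤ) : (((q : ℝ)) : AddCircle (1:ℝ)) = 0 := by
  rw [AddCircle.coe_eq_zero_iff]
  exact ⟨q, by simp⟩

lemma coe_add' (a b : ℝ) : ((a + b : ℝ) : AddCircle (1:ℝ)) = ((a:ℝ) : AddCircle (1:ℝ)) + ((b:ℝ) : AddCircle (1:ℝ)) := rfl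

/-- Let `M` be a connected manifold, `f : M → S¹` continuous, and `H` a finite
group of order `r` acting effectively on `M` such that each `f ∘ φ h` represents the same
class `f^*θ ∈ H¹(M;ℤ)` (equivalently, is homotopic to `f`, by `H¹(M;ℤ) ≅ [M, S¹]`).  Then
there are a homomorphism `μ : H → ℤ/r` and a `μ`-equivariant map `f_H : M → S¹` (with `ℤ/r`
acting on `S¹ = ℝ/ℤ` by rotations) homotopic to `f`. -/
theorem stmt_14 {n : ℕ} (M : Type) [TopologicalSpace M]
    [ChartedSpace (EuclideanSpace ℝ (Fin n)) M] [ConnectedSpace M]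
    (f : C(M, AddCircle (1 : ℝ)))
    (H : Type) [Group H] [Finite H] (r : ℕ) (hr : Nat.card H = r)
    (φ : H →* Equiv.Perm M) (hinj : Function.Injective φ)
    (hcont : ∀ h : H, Continuous (φ h))
    (hfix : ∀ h : H, (f.comp ⟨φ h, hcont h⟩).Homotopic f) :
    ∃ (μ : H →* Multiplicative (ZMod r)) (fH : C(M, AddCircle (1 : ℝ))),
      fH.Homotopic f ∧
      ∀ (h : H) (x : M),
        fH (φ h x) = fH x + ((((Multiplicative.toAdd (μ h)).val : ℝ) / (r : ℝ) : ℝ) :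
          AddCircle (1 : ℝ)) := by
  haveI : Fintype H := Fintype.ofFinite H
  have hr0 : 0 < r := by
    rw [← hr]
    exact Nat.card_pos
  haveI : NeZero r := ⟨by omega⟩
  have hrR : (0:ℝ) < r := by exact_mod_cast hr0
  -- lifts of the differences
  have hlift : ∀ h : H, ∃ δ : C(M, ℝ), ∀ x, ((δ x : ℝ) : AddCircle (1:ℝ)) = f (φ h x) - f x := by
    intro h
    set gh : C(M, AddCircle (1:ℝ)) :=
      ⟨fun x => f (φ h x) - f x, ((f.continuous.comp (hcont h)).sub f.continuous)⟩ with hgh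
    obtain ⟨K⟩ := hfix h
    have hQ : gh.Homotopic (ContinuousMap.const M (0:AddCircle (1:ℝ))) := by
      refine ⟨{
        toFun := fun p => K p - f p.2
        continuous_toFun := K.continuous.sub (f.continuous.comp continuous_snd)
        map_zero_left := ?_
        map_one_left := ?_ }⟩
      · intro x; simp [hgh]
      · intro x; simp
    obtain ⟨δ, hδ⟩ := exists_lift gh hQ.symm
    exact ⟨δ, fun x => by rw [hδ x]; rfl⟩
  choose δδ hδ using hlift
  -- the averaged correction
  let G : C(M, ℝ) := ⟨fun x => ∑ h : H, δδ h x,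
    continuous_finset_sum _ (fun h _ => (δδ h).continuous)⟩
  have hGapp : ∀ x, G x = ∑ h : H, δδ h x := fun x => rfl
  have hcoe : Continuous ((↑) : ℝ → AddCircle (1:ℝ)) := AddCircle.continuous_mk' 1
  let fH : C(M, AddCircle (1:ℝ)) := ⟨fun x => f x + ((G x / r : ℝ) : AddCircle (1:ℝ)),
    f.continuous.add (hcoe.comp (G.continuous.div_const _))⟩
  have hfHapp : ∀ x, fH x = f x + ((G x / r : ℝ) : AddCircle (1:ℝ)) := fun x => rfl
  -- fH is homotopic to f
  have hhom : fH.Homotopic f := by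
    refine ⟨{
      toFun := fun p => f p.2 + ((((1 - (p.1 : ℝ)) * G p.2 / r) : ℝ) : AddCircle (1:ℝ))
      continuous_toFun := (f.continuous.comp continuous_snd).add (hcoe.comp
        (((continuous_const.sub (continuous_subtype_val.comp continuous_fst)).mul
          (G.continuous.comp continuous_snd)).div_const _))
      map_zero_left := ?_
      map_one_left := ?_ }⟩
    · intro x; simp [hfHapp]
    · intro x; simp
  -- the cocycle is an integer constant
  let c : H → M → ℝ := fun k x => r * δδ k x + G (φ k x) - G x
  have hccoe : ∀ k x, ((c k x : ℝ) : AddCircle (1:ℝ)) = 0 := by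
    intro k x
    have h1 : ((c k x : ℝ) : AddCircle (1:ℝ))
        = r • ((δδ k x : ℝ) : AddCircle (1:ℝ))
          + ∑ h : H, ((δδ h (φ k x) : ℝ) : AddCircle (1:ℝ))
          - ∑ h : H, ((δδ h x : ℝ) : AddCircle (1:ℝ)) := by
      show (QuotientAddGroup.mk' _) (c k x) = _
      have : c k x = r • δδ k x + (∑ h : H, δδ h (φ k x)) - ∑ h : H, δδ h x := by
        simp only [c, hGapp, nsmul_eq_mul]
      rw [this, map_sub, map_add, map_nsmul, map_sum, map_sum]
      rfl
    rw [h1]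
    have h2 : ∀ h : H, ((δδ h (φ k x) : ℝ) : AddCircle (1:ℝ)) = f (φ (h*k) x) - f (φ k x) := by
      intro h
      rw [hδ h (φ k x)]
      have : φ h (φ k x) = φ (h*k) x := by rw [map_mul]; rfl
      rw [this]
    have h3 : ∑ h : H, ((δδ h (φ k x) : ℝ) : AddCircle (1:ℝ))
        = (∑ h : H, f (φ h x)) - r • f (φ k x) := by
      rw [Finset.sum_congr rfl (fun h _ => h2 h), Finset.sum_sub_distrib]
      congr 1
      · exact Fintype.sum_equiv (Equiv.mulRight k) _ _ (fun h => rfl)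
      · rw [Finset.sum_const, Finset.card_univ, ← hr, Nat.card_eq_fintype_card]
    have h4 : ∑ h : H, ((δδ h x : ℝ) : AddCircle (1:ℝ)) = (∑ h : H, f (φ h x)) - r • f x := by
      rw [Finset.sum_congr rfl (fun h _ => hδ h x), Finset.sum_sub_distrib]
      congr 1
      rw [Finset.sum_const, Finset.card_univ, ← hr, Nat.card_eq_fintype_card]
    rw [h3, h4, hδ k x]
    rw [smul_sub]
    abel
  have hcint : ∀ k x, ∃ q : ℤ, c k x = q := by
    intro k x
    have : ((c k x : ℝ) : AddCircle (1:ℝ)) = (((0:ℝ)) : AddCircle (1:ℝ)) := by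
      rw [hccoe]; norm_num
    obtain ⟨q, hq⟩ := coe_diff_int _ _ this
    exact ⟨q, by linarith⟩
  have hclc : ∀ k : H, IsLocallyConstant (c k) := by
    intro k
    rw [IsLocallyConstant.iff_eventually_eq]
    intro x
    have hcont' : Continuous (c k) := by
      exact ((continuous_const.mul (δδ k).continuous).add
        (G.continuous.comp (hcont k))).sub G.continuous
    have : ∀ᶠ y in nhds x, |c k y - c k x| < 1 := by
      have h5' : Continuous (fun y => |c k y - c k x|) :=
        (hcont'.sub (continuous_const : Continuous fun _ : M => c k x)).abs
      have h5 : Filter.Tendsto (fun y => |c k y - c k x|) (nhds x) (nhds 0) := by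
        have := h5'.continuousAt (x := x)
        simpa [ContinuousAt] using this
      exact h5 (Iio_mem_nhds one_pos)
    filter_upwards [this] with y hy
    obtain ⟨qy, hqy⟩ := hcint k y
    obtain ⟨qx, hqx⟩ := hcint k x
    rw [hqy, hqx] at hy ⊢
    have : |qy - qx| < 1 := by exact_mod_cast (by push_cast; exact hy : |((qy - qx : ℤ) : ℝ)| < 1)
    have h7 := abs_lt.mp this
    norm_cast
    omega
  have : Nonempty M := inferInstance
  obtain ⟨x₀⟩ := this
  have hcconst : ∀ k x, c k x = c k x₀ :=
    fun k x => (hclc k).apply_eq_of_preconnectedSpace x x₀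
  choose z hz using fun k => hcint k x₀
  -- the key equivariance identity
  have hstar : ∀ k x, fH (φ k x) = fH x + (((z k : ℝ) / r : ℝ) : AddCircle (1:ℝ)) := by
    intro k x
    have hc : r * δδ k x + G (φ k x) - G x = z k := by rw [← hz k, ← hcconst k x]
    have hGr : G (φ k x) / r = (z k : ℝ)/r + G x / r - δδ k x := by
      field_simp
      linarith
    rw [hfHapp, hfHapp, hGr]
    rw [show ((z k : ℝ)/r + G x / r - δδ k x : ℝ) = (G x / r) + ((z k : ℝ)/r + (- δδ k x)) from by ring,
      coe_add', coe_add']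
    have hneg : (((- δδ k x : ℝ)) : AddCircle (1:ℝ)) = - ((δδ k x : ℝ) : AddCircle (1:ℝ)) := rfl
    rw [hneg, hδ k x]
    abel
  -- the homomorphism
  have hzmod : ∀ k l : H, ((z (k*l) : ZMod r)) = (z k : ZMod r) + (z l : ZMod r) := by
    intro k l
    have e1 := hstar (k*l) x₀
    have e2 : φ (k*l) x₀ = φ k (φ l x₀) := by rw [map_mul]; rfl
    have e3 := hstar k (φ l x₀)
    have e4 := hstar l x₀
    rw [e2, e3, e4] at e1
    have e5 : (((z k : ℝ)/r + ((z l : ℝ)/r) : ℝ) : AddCircle (1:ℝ))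
        = (((z (k*l) : ℝ)/r : ℝ) : AddCircle (1:ℝ)) := by
      rw [coe_add']
      have e6 : fH x₀ + (((z (k*l) : ℝ)/r : ℝ) : AddCircle (1:ℝ))
          = fH x₀ + (((((z k : ℝ)/r : ℝ)) : AddCircle (1:ℝ)) + ((((z l : ℝ)/r : ℝ)) : AddCircle (1:ℝ))) := by
        rw [← e1]; abel
      exact (add_left_cancel e6).symm
    obtain ⟨q, hq⟩ := coe_diff_int _ _ e5
    have h7 : ((z k : ℝ) + z l - z (k*l))/r = q := by rw [← hq]; ring
    have h8 : (z k : ℝ) + z l - z (k*l) = q * r := (div_eq_iff hrR.ne').mp h7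
    have hint : (z k + z l - z (k*l) : ℤ) = q * r := by exact_mod_cast h8
    have : ((z k + z l - z (k*l) : ℤ) : ZMod r) = 0 := by
      rw [hint]
      push_cast
      simp
    push_cast at this
    linear_combination -this
  let μ : H →* Multiplicative (ZMod r) :=
    MonoidHom.mk' (fun k => Multiplicative.ofAdd ((z k : ZMod r))) (by
      intro k l
      show Multiplicative.ofAdd ((z (k*l) : ZMod r))
          = Multiplicative.ofAdd ((z k : ZMod r)) * Multiplicative.ofAdd ((z l : ZMod r))
      rw [← ofAdd_add, hzmod k l])
  refine ⟨μ, fH, hhom, ?_⟩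
  intro h x
  rw [hstar h x]
  congr 1
  -- now: coe (z h / r) = coe (val / r)
  have hval : ((((z h : ZMod r)).val : ℤ)) = z h % r := ZMod.val_intCast (z h)
  have hdiv : (z h : ℝ)/r - ((((z h : ZMod r)).val : ℝ))/r = ((z h / r : ℤ) : ℝ) := by
    have : (z h : ℝ) - (((z h : ZMod r)).val : ℝ) = ((r : ℤ) : ℝ) * ((z h / r : ℤ) : ℝ) := by
      have h8 : (z h : ℤ) - (((z h : ZMod r)).val : ℤ) = r * (z h / r) := by
        rw [hval]
        have := Int.emod_add_mul_ediv (z h) (r : ℤ)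
        linarith
      exact_mod_cast congrArg (fun t : ℤ => (t : ℝ)) h8
    rw [div_sub_div_same, this]
    push_cast
    field_simp
  have := coe_int_eq_zero (z h / r)
  have e9 : ((z h : ℝ)/r : ℝ) = (((z h : ZMod r)).val : ℝ)/r + ((z h / r : ℤ) : ℝ) := by linarith
  show (((z h : ℝ)/r : ℝ) : AddCircle (1:ℝ)) = _
  rw [e9, coe_add', this, add_zero]
  rfl
end
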